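/- For every n ∈ ℕ there exist constants α₀ = α₀(n) > 0 and C = C(n) > 0 such that the following holds. Let S ⊂ ℝ^d with d > n, let r > 0 and x ∈ S be such that α(x,r) ≤ α₀ and α(x,2r) ≤ α₀. Then for any choice of realizing planes Γ_x^r and Γ_x^{2r} one has d(Γ_x^r, Γ_x^{2r}) ≤ C·(β(x,r) + β(x,2r)). -/

import Mathlib

open Metric Set

noncomputable section

/-- Gromov–Hausdorff distance via metrics on the disjoint union. -/
def ghDist (X Y : Type) [MetricSpace X] [MetricSpace Y] : ℝ :=
  sInf {r : ℝ | ∃ M : MetricSpace (X ⊕ Y),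
    (∀ a b : X, @dist _ M.toPseudoMetricSpace.toDist (Sum.inl a) (Sum.inl b) = dist a b) ∧
    (∀ a b : Y, @dist _ M.toPseudoMetricSpace.toDist (Sum.inr a) (Sum.inr b) = dist a b) ∧
    @Metric.hausdorffDist _ M.toPseudoMetricSpace (Set.range Sum.inl) (Set.range Sum.inr) ≤ r}

def planeHD {d : ℕ} (S : Set (EuclideanSpace ℝ (Fin d)))
    (Γ : AffineSubspace ℝ (EuclideanSpace ℝ (Fin d)))
    (x : EuclideanSpace ℝ (Fin d)) (r : ℝ) : ℝ :=
  r⁻¹ * Metric.hausdorffDist (S ∩ Metric.ball x r)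
    ((Γ : Set (EuclideanSpace ℝ (Fin d))) ∩ Metric.ball x r)

def planeSup {d : ℕ} (S : Set (EuclideanSpace ℝ (Fin d)))
    (Γ : AffineSubspace ℝ (EuclideanSpace ℝ (Fin d)))
    (x : EuclideanSpace ℝ (Fin d)) (r : ℝ) : ℝ :=
  r⁻¹ * sSup ((fun y => Metric.infDist y (Γ : Set (EuclideanSpace ℝ (Fin d)))) ''
    (S ∩ Metric.ball x r))

def alphaNum (n : ℕ) {d : ℕ} (S : Set (EuclideanSpace ℝ (Fin d)))
    (x : EuclideanSpace ℝ (Fin d)) (r : ℝ) : ℝ :=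
  sInf {t : ℝ | ∃ Γ : AffineSubspace ℝ (EuclideanSpace ℝ (Fin d)),
    x ∈ Γ ∧ Module.finrank ℝ Γ.direction = n ∧ t = planeHD S Γ x r}

def betaNum (n : ℕ) {d : ℕ} (S : Set (EuclideanSpace ℝ (Fin d)))
    (x : EuclideanSpace ℝ (Fin d)) (r : ℝ) : ℝ :=
  sInf {t : ℝ | ∃ Γ : AffineSubspace ℝ (EuclideanSpace ℝ (Fin d)),
    x ∈ Γ ∧ Module.finrank ℝ Γ.direction = n ∧ t = planeSup S Γ x r}

def aTilde (n : ℕ) {d : ℕ} (S : Set (EuclideanSpace ℝ (Fin d)))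
    (x : EuclideanSpace ℝ (Fin d)) (r : ℝ) : ℝ :=
  r⁻¹ * ghDist (↥(S ∩ Metric.ball x r)) (↥(Metric.ball (0 : EuclideanSpace ℝ (Fin n)) r))

def bTilde (n : ℕ) {d : ℕ} (S : Set (EuclideanSpace ℝ (Fin d)))
    (x : EuclideanSpace ℝ (Fin d)) (r : ℝ) : ℝ :=
  r⁻¹ * sInf {δ : ℝ | 0 < δ ∧
    ∃ f : ↥(S ∩ Metric.ball x r) → ↥(Metric.ball (0 : EuclideanSpace ℝ (Fin n)) r),
      ∀ a b, |dist (f a) (f b) - dist a b| < δ}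

def alphaSeq (n : ℕ) {d : ℕ} (S : Set (EuclideanSpace ℝ (Fin d))) (i : ℤ) : ℝ :=
  sSup ((fun x => alphaNum n S x ((2 : ℝ) ^ (-i))) '' (S ∩ Metric.ball 0 1))

def betaSeq (n : ℕ) {d : ℕ} (S : Set (EuclideanSpace ℝ (Fin d))) (i : ℤ) : ℝ :=
  sSup ((fun x => betaNum n S x ((2 : ℝ) ^ (-i))) '' (S ∩ Metric.ball 0 1))

def aTildeSeq (n : ℕ) {d : ℕ} (S : Set (EuclideanSpace ℝ (Fin d))) (ε : ℝ) (i : ℤ) : ℝ :=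
  sSup ((fun x => aTilde n S x ((2 : ℝ) ^ (-i))) '' (S ∩ Metric.ball 0 (1 - ε)))

def bTildeSeq (n : ℕ) {d : ℕ} (S : Set (EuclideanSpace ℝ (Fin d))) (ε : ℝ) (i : ℤ) : ℝ :=
  sSup ((fun x => bTilde n S x ((2 : ℝ) ^ (-i))) '' (S ∩ Metric.ball 0 (1 - ε)))

def planeDist {d : ℕ} (Γ₁ Γ₂ : AffineSubspace ℝ (EuclideanSpace ℝ (Fin d))) : ℝ :=
  Metric.hausdorffDist
    ((Γ₁.direction : Set (EuclideanSpace ℝ (Fin d))) ∩ Metric.closedBall 0 1)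
    ((Γ₂.direction : Set (EuclideanSpace ℝ (Fin d))) ∩ Metric.closedBall 0 1)

def simplexVol (n : ℕ) {d : ℕ} (p : Fin (n + 1) → EuclideanSpace ℝ (Fin d)) : ℝ :=
  Real.sqrt (Matrix.det (Matrix.of fun i j : Fin n =>
    (inner ℝ (p i.succ - p 0) (p j.succ - p 0) : ℝ))) / (n.factorial : ℝ)

def IsRealizingPlane (n : ℕ) {d : ℕ} (C' : ℝ) (S : Set (EuclideanSpace ℝ (Fin d)))
    (Γ : AffineSubspace ℝ (EuclideanSpace ℝ (Fin d))) (x : EuclideanSpace ℝ (Fin d))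
    (r : ℝ) : Prop :=
  x ∈ Γ ∧ Module.finrank ℝ Γ.direction = n ∧ planeSup S Γ x r = betaNum n S x r ∧
    planeHD S Γ x r ≤ C' * alphaNum n S x r

/-!
Let `V`, `W` be the directions of `Γ₁ = Γ_x^r` and `Γ₂ = Γ_x^{2r}`, and let `T` be the orthogonal
projection onto `Wᗮ`, restricted to `V`. A vector `v ∈ V` with `r/2 ≤ ‖v‖ < r` gives a point
`x + v ∈ Γ₁ ∩ B_r(x)`, which is `r·C'α`-close to some `s ∈ S ∩ B_r(x)`; that point is within
`rβ(x,r)` of `Γ₁` and within `2rβ(x,2r)` of `Γ₂`. Splitting `v` through the projection of `s - x`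
onto `V` yields `‖T‖ ≤ 2(β(x,r) + 2β(x,2r)) + O(α)‖T‖`, and for small `α` the last term is absorbed.
Once `‖T‖ ≤ 1/2`, the projection `V → W` is injective, hence onto since `dim V = dim W`, so every
`w ∈ W` is within `2‖T‖‖w‖` of `V` as well, and `d(Γ₁, Γ₂) ≤ 2‖T‖`.
-/

section Metric

variable {α : Type*} [PseudoMetricSpace α]

lemma le_add_mul_infDist {A : Set α} {y : α} {a c M : ℝ} (hA : A.Nonempty) (hM : 0 ≤ M)
    (h : ∀ s ∈ A, a ≤ c + M * dist y s) : a ≤ c + M * infDist y A := by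
  rcases hM.eq_or_lt with rfl | hM
  · obtain ⟨s, hs⟩ := hA
    simpa using h s hs
  · have : (a - c) / M ≤ infDist y A :=
      (le_infDist hA).2 fun s hs => by rw [div_le_iff₀ hM]; linarith [h s hs]
    rw [div_le_iff₀ hM] at this
    linarith

lemma hausdorffEDist_inter_ball_ne_top {A B : Set α} {x : α} {r : ℝ} (hr : 0 < r)
    (hA : x ∈ A) (hB : x ∈ B) : hausdorffEDist (A ∩ ball x r) (B ∩ ball x r) ≠ ⊤ :=
  hausdorffEDist_ne_top_of_nonempty_of_bounded ⟨x, hA, mem_ball_self hr⟩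
    ⟨x, hB, mem_ball_self hr⟩ (isBounded_ball.subset inter_subset_right)
    (isBounded_ball.subset inter_subset_right)

end Metric

section Tilt

variable {E : Type*} [NormedAddCommGroup E] [InnerProductSpace ℝ E]

namespace Submodule

lemma norm_starProjection_orthogonal_le_norm_sub (V : Submodule ℝ E) [V.HasOrthogonalProjection]
    {u : E} (hu : u ∈ V) (z : E) : ‖Vᗮ.starProjection z‖ ≤ ‖z - u‖ :=
  calc ‖Vᗮ.starProjection z‖ = ‖Vᗮ.starProjection (z - u)‖ := by
        rw [map_sub, starProjection_orthogonal_apply_eq_zero hu, sub_zero]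
    _ ≤ ‖z - u‖ := norm_starProjection_apply_le _ _

lemma exists_mem_inter_closedBall_dist_le {V W : Submodule ℝ E} [W.HasOrthogonalProjection]
    {K : ℝ} (hK : 0 ≤ K) (hVW : ∀ v ∈ V, ‖Wᗮ.starProjection v‖ ≤ K * ‖v‖) {v : E}
    (hv : v ∈ (V : Set E) ∩ closedBall 0 1) :
    ∃ w ∈ (W : Set E) ∩ closedBall 0 1, dist v w ≤ K := by
  have hv₁ : ‖v‖ ≤ 1 := mem_closedBall_zero_iff.1 hv.2
  refine ⟨W.starProjection v, ⟨W.starProjection_apply_mem v, ?_⟩, ?_⟩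
  · exact mem_closedBall_zero_iff.2 ((W.norm_starProjection_apply_le v).trans hv₁)
  · rw [dist_eq_norm, ← starProjection_orthogonal_val]
    exact (hVW v hv.1).trans (mul_le_of_le_one_right hK hv₁)

lemma hausdorffDist_inter_closedBall_le {V W : Submodule ℝ E} [V.HasOrthogonalProjection]
    [W.HasOrthogonalProjection] {K : ℝ} (hK : 0 ≤ K)
    (hVW : ∀ v ∈ V, ‖Wᗮ.starProjection v‖ ≤ K * ‖v‖)
    (hWV : ∀ w ∈ W, ‖Vᗮ.starProjection w‖ ≤ K * ‖w‖) :
    hausdorffDist ((V : Set E) ∩ closedBall 0 1) ((W : Set E) ∩ closedBall 0 1) ≤ K :=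
  hausdorffDist_le_of_mem_dist hK (fun _ hv => exists_mem_inter_closedBall_dist_le hK hVW hv)
    (fun _ hw => exists_mem_inter_closedBall_dist_le hK hWV hw)

/-- The projection `V → W` is injective since `M < 1`, hence onto as `dim V = dim W`; a preimage `a`
of `w` lies within `M‖a‖ ≤ 2M‖w‖` of `w`. -/
lemma norm_starProjection_orthogonal_le_of_finrank_eq {V W : Submodule ℝ E}
    [FiniteDimensional ℝ V] [FiniteDimensional ℝ W]
    (hrank : Module.finrank ℝ V = Module.finrank ℝ W) {M : ℝ} (hM₀ : 0 ≤ M) (hM : M ≤ 1 / 2)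
    (hVW : ∀ v ∈ V, ‖Wᗮ.starProjection v‖ ≤ M * ‖v‖) {w : E} (hw : w ∈ W) :
    ‖Vᗮ.starProjection w‖ ≤ 2 * M * ‖w‖ := by
  let f : V →ₗ[ℝ] W := W.orthogonalProjectionOnto.toLinearMap ∘ₗ V.subtype
  have hf : ∀ a : V, (f a : E) = W.starProjection a := fun _ => rfl
  have hinj : Function.Injective f := by
    refine (injective_iff_map_eq_zero f).2 fun a ha => ?_
    have hPa : Wᗮ.starProjection a = a := by
      rw [starProjection_orthogonal_val, ← hf, ha, ZeroMemClass.coe_zero, sub_zero]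
    have h := hVW a a.2
    rw [hPa] at h
    exact Subtype.ext (norm_eq_zero.1 (by nlinarith [norm_nonneg (a : E)]))
  obtain ⟨a, ha⟩ := (LinearMap.injective_iff_surjective_of_finrank_eq_finrank hrank).1 hinj ⟨w, hw⟩
  have hproj : W.starProjection a = w := by rw [← hf, ha]
  have hdist : ‖(a : E) - w‖ ≤ M * ‖(a : E)‖ := by
    rw [← hproj, ← starProjection_orthogonal_val]
    exact hVW a a.2
  have ha_le : ‖(a : E)‖ ≤ 2 * ‖w‖ := by
    nlinarith [norm_le_norm_add_norm_sub' (a : E) w, norm_nonneg (a : E)]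
  calc ‖Vᗮ.starProjection w‖ ≤ ‖w - a‖ := norm_starProjection_orthogonal_le_norm_sub V a.2 w
    _ = ‖(a : E) - w‖ := norm_sub_rev _ _
    _ ≤ 2 * M * ‖w‖ := by nlinarith

end Submodule

namespace AffineSubspace

lemma norm_starProjection_orthogonal_sub_le_infDist {Γ : AffineSubspace ℝ E}
    [Γ.direction.HasOrthogonalProjection] {x : E} (hx : x ∈ Γ) (z : E) :
    ‖Γ.directionᗮ.starProjection (z - x)‖ ≤ infDist z Γ :=
  (le_infDist ⟨x, hx⟩).2 fun p hp => by
    simpa [dist_eq_norm] using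
      Γ.direction.norm_starProjection_orthogonal_le_norm_sub (Γ.vsub_mem_direction hp hx) (z - x)

/-- Split `v` through the projection of `s - x` onto the direction of `Γ₁`. -/
lemma norm_starProjection_orthogonal_le_infDist_add {Γ₁ Γ₂ : AffineSubspace ℝ E}
    [Γ₁.direction.HasOrthogonalProjection] [Γ₂.direction.HasOrthogonalProjection] {x : E}
    (hx₁ : x ∈ Γ₁) (hx₂ : x ∈ Γ₂) {M : ℝ} (hM : 0 ≤ M)
    (hVW : ∀ u ∈ Γ₁.direction, ‖Γ₂.directionᗮ.starProjection u‖ ≤ M * ‖u‖)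
    {v : E} (hv : v ∈ Γ₁.direction) (s : E) :
    ‖Γ₂.directionᗮ.starProjection v‖ ≤
      infDist s Γ₁ + infDist s Γ₂ + M * (dist (v + x) s + infDist s Γ₁) := by
  set P := Γ₂.directionᗮ.starProjection
  set V := Γ₁.direction
  set u := V.starProjection (s - x)
  have hu : u = (s - x) - Vᗮ.starProjection (s - x) :=
    eq_sub_of_add_eq (V.starProjection_add_starProjection_orthogonal (s - x))
  have h₁ := norm_starProjection_orthogonal_sub_le_infDist hx₁ s
  have h₂ := norm_starProjection_orthogonal_sub_le_infDist hx₂ s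
  have hPu : ‖P u‖ ≤ infDist s Γ₂ + infDist s Γ₁ :=
    calc ‖P u‖ = ‖P (s - x) - P (Vᗮ.starProjection (s - x))‖ := by rw [hu, map_sub]
      _ ≤ ‖P (s - x)‖ + ‖P (Vᗮ.starProjection (s - x))‖ := norm_sub_le _ _
      _ ≤ infDist s Γ₂ + infDist s Γ₁ :=
          add_le_add h₂ ((Submodule.norm_starProjection_apply_le _ _).trans h₁)
  have hvu : ‖v - u‖ ≤ dist (v + x) s + infDist s Γ₁ :=
    calc ‖v - u‖ = ‖(v + x - s) + Vᗮ.starProjection (s - x)‖ := by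
          rw [hu]; congr 1; abel
      _ ≤ ‖v + x - s‖ + ‖Vᗮ.starProjection (s - x)‖ := norm_add_le _ _
      _ ≤ dist (v + x) s + infDist s Γ₁ := by rw [dist_eq_norm]; exact add_le_add le_rfl h₁
  calc ‖P v‖ = ‖P u + P (v - u)‖ := by rw [← map_add, add_sub_cancel]
    _ ≤ ‖P u‖ + ‖P (v - u)‖ := norm_add_le _ _
    _ ≤ (infDist s Γ₂ + infDist s Γ₁) + M * ‖v - u‖ :=
        add_le_add hPu (hVW _ (V.sub_mem hv (V.starProjection_apply_mem _)))
    _ ≤ _ := by linarith [mul_le_mul_of_nonneg_left hvu hM]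

end AffineSubspace

end Tilt

section Plane

variable {d : ℕ} {S : Set (EuclideanSpace ℝ (Fin d))} {x : EuclideanSpace ℝ (Fin d)} {r : ℝ}
  {Γ Γ₁ Γ₂ : AffineSubspace ℝ (EuclideanSpace ℝ (Fin d))}

lemma planeHD_nonneg (hr : 0 ≤ r) : 0 ≤ planeHD S Γ x r :=
  mul_nonneg (inv_nonneg.2 hr) hausdorffDist_nonneg

lemma planeSup_nonneg (hr : 0 ≤ r) : 0 ≤ planeSup S Γ x r :=
  mul_nonneg (inv_nonneg.2 hr) (Real.sSup_nonneg (by rintro _ ⟨y, -, rfl⟩; exact infDist_nonneg))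

lemma alphaNum_nonneg (n : ℕ) (hr : 0 ≤ r) : 0 ≤ alphaNum n S x r :=
  Real.sInf_nonneg (by rintro _ ⟨Γ, -, -, rfl⟩; exact planeHD_nonneg hr)

lemma infDist_le_mul_planeSup (hr : 0 < r) (hx : x ∈ Γ) {y : EuclideanSpace ℝ (Fin d)}
    (hy : y ∈ S ∩ ball x r) : infDist y Γ ≤ r * planeSup S Γ x r := by
  rw [planeSup, ← mul_assoc, mul_inv_cancel₀ hr.ne', one_mul]
  refine le_csSup ⟨r, ?_⟩ ⟨y, hy, rfl⟩
  rintro _ ⟨z, hz, rfl⟩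
  exact (infDist_le_dist_of_mem hx).trans (mem_ball.1 hz.2).le

lemma infDist_le_mul_planeHD (hr : 0 < r) (hxS : x ∈ S) (hx : x ∈ Γ)
    {y : EuclideanSpace ℝ (Fin d)} (hy : y ∈ (Γ : Set _) ∩ ball x r) :
    infDist y (S ∩ ball x r) ≤ r * planeHD S Γ x r := by
  rw [planeHD, ← mul_assoc, mul_inv_cancel₀ hr.ne', one_mul, hausdorffDist_comm]
  exact infDist_le_hausdorffDist_of_mem hy (hausdorffEDist_inter_ball_ne_top hr hx hxS)

lemma planeSup_le_planeHD (hr : 0 < r) (hxS : x ∈ S) (hx : x ∈ Γ) :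
    planeSup S Γ x r ≤ planeHD S Γ x r := by
  refine mul_le_mul_of_nonneg_left (csSup_le ⟨_, x, ⟨hxS, mem_ball_self hr⟩, rfl⟩ ?_)
    (inv_nonneg.2 hr.le)
  rintro _ ⟨y, hy, rfl⟩
  exact (infDist_le_infDist_of_subset inter_subset_left ⟨x, hx, mem_ball_self hr⟩).trans
    (infDist_le_hausdorffDist_of_mem hy (hausdorffEDist_inter_ball_ne_top hr hxS hx))

/-- The test point `s` ranges over `S ∩ B_r(x)`, which comes `r · planeHD`-close to
`v + x ∈ Γ₁ ∩ B_r(x)`. -/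
lemma norm_starProjection_orthogonal_le_of_planeSup (hr : 0 < r) (hxS : x ∈ S) (hx₁ : x ∈ Γ₁)
    (hx₂ : x ∈ Γ₂) {M : ℝ} (hM : 0 ≤ M)
    (hVW : ∀ u ∈ Γ₁.direction, ‖Γ₂.directionᗮ.starProjection u‖ ≤ M * ‖u‖)
    {v : EuclideanSpace ℝ (Fin d)} (hv : v ∈ Γ₁.direction) (hvr : ‖v‖ < r) :
    ‖Γ₂.directionᗮ.starProjection v‖ ≤
      r * (planeSup S Γ₁ x r + 2 * planeSup S Γ₂ x (2 * r)) +
        M * r * (planeHD S Γ₁ x r + planeSup S Γ₁ x r) := by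
  have hy : v + x ∈ (Γ₁ : Set _) ∩ ball x r :=
    ⟨Γ₁.vadd_mem_of_mem_direction hv hx₁, by rwa [mem_ball, dist_eq_norm, add_sub_cancel_right]⟩
  have hs : ∀ s ∈ S ∩ ball x r, ‖Γ₂.directionᗮ.starProjection v‖ ≤
      r * (planeSup S Γ₁ x r + 2 * planeSup S Γ₂ x (2 * r)) + M * r * planeSup S Γ₁ x r +
        M * dist (v + x) s := by
    intro s hs
    have h₁ := infDist_le_mul_planeSup hr hx₁ hs
    have h₂ := infDist_le_mul_planeSup (r := 2 * r) (by linarith) hx₂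
      ⟨hs.1, ball_subset_ball (by linarith) hs.2⟩
    have := AffineSubspace.norm_starProjection_orthogonal_le_infDist_add hx₁ hx₂ hM hVW hv s
    linarith [mul_le_mul_of_nonneg_left h₁ hM]
  have := le_add_mul_infDist (A := S ∩ ball x r) ⟨x, hxS, mem_ball_self hr⟩ hM hs
  linarith [mul_le_mul_of_nonneg_left (infDist_le_mul_planeHD hr hxS hx₁ hy) hM]

lemma norm_starProjection_orthogonal_comp_subtypeL_le (hr : 0 < r) (hxS : x ∈ S)
    (hx₁ : x ∈ Γ₁) (hx₂ : x ∈ Γ₂) (hHD : planeHD S Γ₁ x r ≤ 1 / 40) :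
    ‖Γ₂.directionᗮ.starProjection ∘L Γ₁.direction.subtypeL‖ ≤
      20 / 9 * (planeSup S Γ₁ x r + 2 * planeSup S Γ₂ x (2 * r)) := by
  set T := Γ₂.directionᗮ.starProjection ∘L Γ₁.direction.subtypeL
  set b := planeSup S Γ₁ x r + 2 * planeSup S Γ₂ x (2 * r)
  set a := planeHD S Γ₁ x r + planeSup S Γ₁ x r
  have hb : 0 ≤ b := by
    have hb₁₀ := planeSup_nonneg (S := S) (Γ := Γ₁) (x := x) hr.le
    have hb₂₀ := planeSup_nonneg (S := S) (Γ := Γ₂) (x := x) (r := 2 * r) (by linarith)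
    positivity
  have ha : 0 ≤ a := add_nonneg (planeHD_nonneg hr.le) (planeSup_nonneg hr.le)
  have ha' : a ≤ 1 / 20 := by linarith [planeSup_le_planeHD hr hxS hx₁ (S := S)]
  have hshell : ‖T‖ ≤ 2 * b + 2 * ‖T‖ * a := by
    refine T.opNorm_le_of_shell hr (by positivity) (c := (2 : ℝ)) (by norm_num) fun v hv₁ hv₂ => ?_
    rw [Real.norm_two] at hv₁
    have := norm_starProjection_orthogonal_le_of_planeSup hr hxS hx₁ hx₂ (norm_nonneg T)
      (fun u hu => T.le_opNorm ⟨u, hu⟩) v.2 hv₂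
    calc ‖T v‖ ≤ r * b + ‖T‖ * r * a := this
      _ = (2 * b + 2 * ‖T‖ * a) * (r / 2) := by ring
      _ ≤ (2 * b + 2 * ‖T‖ * a) * ‖v‖ := by gcongr
  linarith [mul_le_mul_of_nonneg_left ha' (norm_nonneg T)]

theorem planeDist_le_of_planeHD_le (hr : 0 < r) (hxS : x ∈ S) (hx₁ : x ∈ Γ₁) (hx₂ : x ∈ Γ₂)
    (hrank : Module.finrank ℝ Γ₁.direction = Module.finrank ℝ Γ₂.direction)
    (h₁ : planeHD S Γ₁ x r ≤ 1 / 40) (h₂ : planeHD S Γ₂ x (2 * r) ≤ 1 / 40) :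
    planeDist Γ₁ Γ₂ ≤ 10 * (planeSup S Γ₁ x r + planeSup S Γ₂ x (2 * r)) := by
  set T := Γ₂.directionᗮ.starProjection ∘L Γ₁.direction.subtypeL
  have hT := norm_starProjection_orthogonal_comp_subtypeL_le hr hxS hx₁ hx₂ h₁
  have hb₁ := planeSup_le_planeHD hr hxS hx₁
  have hb₂ := planeSup_le_planeHD (by linarith) hxS hx₂ (r := 2 * r)
  have hb₁₀ := planeSup_nonneg (S := S) (Γ := Γ₁) (x := x) hr.le
  have hb₂₀ := planeSup_nonneg (S := S) (Γ := Γ₂) (x := x) (r := 2 * r) (by linarith)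
  have hVW : ∀ v ∈ Γ₁.direction, ‖Γ₂.directionᗮ.starProjection v‖ ≤ ‖T‖ * ‖v‖ :=
    fun v hv => T.le_opNorm ⟨v, hv⟩
  have hWV := fun w (hw : w ∈ Γ₂.direction) =>
    Submodule.norm_starProjection_orthogonal_le_of_finrank_eq hrank (norm_nonneg T)
      (by linarith) hVW hw
  calc planeDist Γ₁ Γ₂ ≤ 2 * ‖T‖ :=
        Submodule.hausdorffDist_inter_closedBall_le (by positivity)
          (fun v hv => (hVW v hv).trans (by gcongr; linarith [norm_nonneg T])) hWV
    _ ≤ 10 * (planeSup S Γ₁ x r + planeSup S Γ₂ x (2 * r)) := by linarith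

end Plane

lemma mul_le_of_le_div_max_one {a c ε : ℝ} (ha : 0 ≤ a) (h : a ≤ ε / max c 1) : c * a ≤ ε :=
  calc c * a ≤ max c 1 * a := mul_le_mul_of_nonneg_right (le_max_left _ _) ha
    _ ≤ ε := by rwa [le_div_iff₀ (by positivity), mul_comm] at h

theorem stmt11_general (n : ℕ) (C' : ℝ) :
    ∃ α₀ : ℝ, 0 < α₀ ∧ ∃ C : ℝ, 0 < C ∧
      ∀ (d : ℕ) (S : Set (EuclideanSpace ℝ (Fin d))) (x : EuclideanSpace ℝ (Fin d)) (r : ℝ),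
        n < d → x ∈ S → 0 < r →
        alphaNum n S x r ≤ α₀ → alphaNum n S x (2 * r) ≤ α₀ →
        ∀ Γ₁ Γ₂ : AffineSubspace ℝ (EuclideanSpace ℝ (Fin d)),
          IsRealizingPlane n C' S Γ₁ x r → IsRealizingPlane n C' S Γ₂ x (2 * r) →
          planeDist Γ₁ Γ₂ ≤ C * (betaNum n S x r + betaNum n S x (2 * r)) := by
  refine ⟨1 / 40 / max C' 1, by positivity, 10, by norm_num, ?_⟩
  intro d S x r _ hxS hr hα₁ hα₂ Γ₁ Γ₂ ⟨hx₁, hdim₁, hsup₁, hHD₁⟩ ⟨hx₂, hdim₂, hsup₂, hHD₂⟩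
  rw [← hsup₁, ← hsup₂]
  exact planeDist_le_of_planeHD_le hr hxS hx₁ hx₂ (hdim₁.trans hdim₂.symm)
    (hHD₁.trans (mul_le_of_le_div_max_one (alphaNum_nonneg n hr.le) hα₁))
    (hHD₂.trans (mul_le_of_le_div_max_one (alphaNum_nonneg n (by linarith)) hα₂))

theorem stmt11 (n : ℕ) (C' : ℝ) (hC' : 1 ≤ C') :
    ∃ α₀ : ℝ, 0 < α₀ ∧ ∃ C : ℝ, 0 < C ∧
      ∀ (d : ℕ) (S : Set (EuclideanSpace ℝ (Fin d))) (x : EuclideanSpace ℝ (Fin d)) (r : ℝ),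
        n < d → x ∈ S → 0 < r →
        alphaNum n S x r ≤ α₀ → alphaNum n S x (2 * r) ≤ α₀ →
        ∀ Γ₁ Γ₂ : AffineSubspace ℝ (EuclideanSpace ℝ (Fin d)),
          IsRealizingPlane n C' S Γ₁ x r → IsRealizingPlane n C' S Γ₂ x (2 * r) →
          planeDist Γ₁ Γ₂ ≤ C * (betaNum n S x r + betaNum n S x (2 * r)) :=
  stmt11_general n C'

end
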